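/- arXiv:1706.06610 — 2 statements merged into one kernel-verified Lean document; each statement's English description precedes it below -/
import Mathlib

section
/- (Theorem 2.5 of the paper, from Nakatsukasa.) Let A, B ∈ ℂ^{n×n} be Hermitian with B positive definite, and let λ₁ ≤ λ₂ ≤ … ≤ λ_n be the eigenvalues of the pencil (A, B), i.e., the values λ for which Ax = λBx has a nonzero solution x. Let ΔA, ΔB ∈ ℂ^{n×n} be Hermitian with ‖ΔB‖₂ < λ_min(B), where λ_min(B) is the smallest eigenvalue of B and ‖·‖₂ the spectral norm. Then B + ΔB is positive definite, and the eigenvalues λ̂₁ ≤ λ̂₂ ≤ … ≤ λ̂_n of the pencil (A + ΔA, B + ΔB) satisfy, for each i, |λ_i − λ̂_i| ≤ ‖ΔA‖₂/λ_min(B) + ((|λ_i| λ_min(B) + ‖ΔA‖₂) / (λ_min(B)(λ_min(B) − ‖ΔB‖₂))) · ‖ΔB‖₂. -/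
open scoped Matrix.Norms.L2Operator ComplexOrder

/-- The spectral (operator 2-) norm of a complex matrix. -/
noncomputable def specNorm {n : ℕ} (M : Matrix (Fin n) (Fin n) ℂ) : ℝ := ‖M‖

/-- `l` lists the eigenvalues of the pencil `(A, B)` sorted increasingly, counted with
multiplicity: it is monotone, and for each `μ` the number of indices `i` with `l i = μ`
equals the dimension of the solution space of `A x = μ B x` (for a Hermitian definite
pencil, algebraic and geometric multiplicities agree and sum to `n`). -/
def IsSortedPencilEigs {n : ℕ} (A B : Matrix (Fin n) (Fin n) ℂ) (l : Fin n → ℝ) : Prop :=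
  Monotone l ∧ ∀ μ : ℝ, Nat.card {i : Fin n // l i = μ} =
    Module.finrank ℂ (LinearMap.ker (Matrix.toLin' (A - (μ : ℂ) • B)))

open scoped Matrix

namespace PencilAux

variable {n : ℕ}

/-- eigenspace of the pencil -/
noncomputable def Vsp (A B : Matrix (Fin n) (Fin n) ℂ) (μ : ℝ) : Submodule ℂ (Fin n → ℂ) :=
  LinearMap.ker (Matrix.toLin' (A - (μ : ℂ) • B))

lemma mem_Vsp {A B : Matrix (Fin n) (Fin n) ℂ} {μ : ℝ} {x : Fin n → ℂ} :
    x ∈ Vsp A B μ ↔ A *ᵥ x = (μ : ℂ) • (B *ᵥ x) := by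
  simp only [Vsp, LinearMap.mem_ker, Matrix.toLin'_apply, Matrix.sub_mulVec,
    Matrix.smul_mulVec, sub_eq_zero]

/-- conjugate symmetry of the sesquilinear form of a Hermitian matrix -/
lemma phi_conj {M : Matrix (Fin n) (Fin n) ℂ} (hM : M.IsHermitian) (x y : Fin n → ℂ) :
    star (star x ⬝ᵥ M *ᵥ y) = star y ⬝ᵥ M *ᵥ x := by
  rw [Matrix.star_dotProduct, star_star, Matrix.star_mulVec, Matrix.dotProduct_mulVec, hM]

lemma phi_col {A B : Matrix (Fin n) (Fin n) ℂ} {μ : ℝ} {y : Fin n → ℂ}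
    (hy : y ∈ Vsp A B μ) (x : Fin n → ℂ) :
    star x ⬝ᵥ A *ᵥ y = (μ : ℂ) * (star x ⬝ᵥ B *ᵥ y) := by
  rw [mem_Vsp.mp hy, dotProduct_smul, smul_eq_mul]

lemma phi_row {A B : Matrix (Fin n) (Fin n) ℂ} (hA : A.IsHermitian) (hB : B.IsHermitian)
    {μ : ℝ} {x : Fin n → ℂ} (hx : x ∈ Vsp A B μ) (y : Fin n → ℂ) :
    star x ⬝ᵥ A *ᵥ y = (μ : ℂ) * (star x ⬝ᵥ B *ᵥ y) := by
  have h1 : star x ⬝ᵥ A *ᵥ y = star (star y ⬝ᵥ A *ᵥ x) := by rw [phi_conj hA]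
  have h2 : star x ⬝ᵥ B *ᵥ y = star (star y ⬝ᵥ B *ᵥ x) := by rw [phi_conj hB]
  rw [h1, h2, phi_col hx, star_mul', Complex.star_def, Complex.conj_ofReal]

lemma phi_orth {A B : Matrix (Fin n) (Fin n) ℂ} (hA : A.IsHermitian) (hB : B.IsHermitian)
    {μ ν : ℝ} (hμν : μ ≠ ν) {x y : Fin n → ℂ} (hx : x ∈ Vsp A B μ) (hy : y ∈ Vsp A B ν) :
    star x ⬝ᵥ B *ᵥ y = 0 ∧ star x ⬝ᵥ A *ᵥ y = 0 := by
  have h1 := phi_row hA hB hx y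
  have h2 := phi_col hy x
  have h3 : ((μ : ℂ) - ν) * (star x ⬝ᵥ B *ᵥ y) = 0 := by
    rw [sub_mul, ← h1, ← h2, sub_self]
  have h4 : (star x ⬝ᵥ B *ᵥ y) = 0 := by
    rcases mul_eq_zero.mp h3 with h | h
    · exact absurd (by exact_mod_cast sub_eq_zero.mp h) hμν
    · exact h
  exact ⟨h4, by rw [h2, h4, mul_zero]⟩

/-- the linear functional `y ↦ star x ⬝ᵥ M *ᵥ y` -/
noncomputable def phiLin (M : Matrix (Fin n) (Fin n) ℂ) (x : Fin n → ℂ) :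
    (Fin n → ℂ) →ₗ[ℂ] ℂ where
  toFun y := star x ⬝ᵥ M *ᵥ y
  map_add' y z := by simp [Matrix.mulVec_add, dotProduct_add]
  map_smul' c y := by simp [Matrix.mulVec_smul, dotProduct_smul]

lemma phi_orth_sup {A B : Matrix (Fin n) (Fin n) ℂ} (hA : A.IsHermitian) (hB : B.IsHermitian)
    {μ : ℝ} {s : Finset ℝ} (hμs : μ ∉ s) {x y : Fin n → ℂ} (hx : x ∈ Vsp A B μ)
    (hy : y ∈ ⨆ ν ∈ s, Vsp A B ν) :
    star x ⬝ᵥ B *ᵥ y = 0 ∧ star x ⬝ᵥ A *ᵥ y = 0 := by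
  have hle : (⨆ ν ∈ s, Vsp A B ν) ≤ LinearMap.ker (phiLin B x) ⊓ LinearMap.ker (phiLin A x) := by
    refine iSup₂_le fun ν hν => fun z hz => ?_
    have hμν : μ ≠ ν := fun h => hμs (h ▸ hν)
    obtain ⟨h1, h2⟩ := phi_orth hA hB hμν hx hz
    exact ⟨h1, h2⟩
  obtain ⟨h1, h2⟩ := hle hy
  exact ⟨h1, h2⟩


variable {A B : Matrix (Fin n) (Fin n) ℂ}

lemma finrank_sup (hA : A.IsHermitian) (hB : B.PosDef) (s : Finset ℝ) :
    Module.finrank ℂ ↥(⨆ μ ∈ s, Vsp A B μ) = ∑ μ ∈ s, Module.finrank ℂ ↥(Vsp A B μ) := by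
  classical
  induction s using Finset.induction_on with
  | empty => simp
  | @insert a s ha ih =>
    rw [Finset.iSup_insert, Finset.sum_insert ha]
    have hdisj : Vsp A B a ⊓ (⨆ μ ∈ s, Vsp A B μ) = ⊥ := by
      rw [eq_bot_iff]
      intro x hx
      obtain ⟨hx1, hx2⟩ := hx
      by_contra hxne
      have hx0 : x ≠ 0 := fun h => hxne (h ▸ Submodule.zero_mem _)
      have := (phi_orth_sup hA hB.1 ha hx1 hx2).1
      have hpos := hB.dotProduct_mulVec_pos hx0
      rw [this] at hpos
      simp at hpos
    have := Submodule.finrank_sup_add_finrank_inf_eq (Vsp A B a) (⨆ μ ∈ s, Vsp A B μ)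
    rw [hdisj] at this
    simp only [finrank_bot, add_zero] at this
    omega

lemma quad_le (hA : A.IsHermitian) (hB : B.PosDef) {s : Finset ℝ} {t : ℝ}
    (hst : ∀ μ ∈ s, μ ≤ t) :
    ∀ x ∈ ⨆ μ ∈ s, Vsp A B μ, (star x ⬝ᵥ A *ᵥ x).re ≤ t * (star x ⬝ᵥ B *ᵥ x).re := by
  classical
  induction s using Finset.induction_on with
  | empty => intro x hx; simp at hx; simp [hx]
  | @insert a s ha ih =>
    intro x hx
    rw [Finset.iSup_insert] at hx
    obtain ⟨u, hu, v, hv, rfl⟩ := Submodule.mem_sup.mp hx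
    obtain ⟨hBuv, hAuv⟩ := phi_orth_sup hA hB.1 ha hu hv
    have hBvu : star v ⬝ᵥ B *ᵥ u = 0 := by rw [← phi_conj hB.1, hBuv, star_zero]
    have hAvu : star v ⬝ᵥ A *ᵥ u = 0 := by rw [← phi_conj hA, hAuv, star_zero]
    have expand : ∀ M : Matrix (Fin n) (Fin n) ℂ,
        star (u + v) ⬝ᵥ M *ᵥ (u + v) =
          star u ⬝ᵥ M *ᵥ u + star u ⬝ᵥ M *ᵥ v + (star v ⬝ᵥ M *ᵥ u + star v ⬝ᵥ M *ᵥ v) := by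
      intro M
      rw [star_add, Matrix.mulVec_add, add_dotProduct, dotProduct_add,
        dotProduct_add]
    have hAuu : (star u ⬝ᵥ A *ᵥ u).re = a * (star u ⬝ᵥ B *ᵥ u).re := by
      rw [phi_row hA hB.1 hu u]
      simp [Complex.mul_re]
    have hBuu_nonneg : 0 ≤ (star u ⬝ᵥ B *ᵥ u).re := by
      have := hB.posSemidef.dotProduct_mulVec_nonneg u
      exact (Complex.le_def.mp this).1
    have hvle := ih (fun μ hμ => hst μ (Finset.mem_insert_of_mem hμ)) v hv
    have hat : a ≤ t := hst a (Finset.mem_insert_self a s)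
    rw [expand A, expand B, hBuv, hBvu, hAuv, hAvu]
    simp only [add_zero, zero_add, Complex.add_re]
    rw [hAuu, mul_add]
    have h1 : a * (star u ⬝ᵥ B *ᵥ u).re ≤ t * (star u ⬝ᵥ B *ᵥ u).re :=
      mul_le_mul_of_nonneg_right hat hBuu_nonneg
    linarith

lemma quad_ge (hA : A.IsHermitian) (hB : B.PosDef) {s : Finset ℝ} {t : ℝ}
    (hst : ∀ μ ∈ s, t ≤ μ) :
    ∀ x ∈ ⨆ μ ∈ s, Vsp A B μ, t * (star x ⬝ᵥ B *ᵥ x).re ≤ (star x ⬝ᵥ A *ᵥ x).re := by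
  classical
  induction s using Finset.induction_on with
  | empty => intro x hx; simp at hx; simp [hx]
  | @insert a s ha ih =>
    intro x hx
    rw [Finset.iSup_insert] at hx
    obtain ⟨u, hu, v, hv, rfl⟩ := Submodule.mem_sup.mp hx
    obtain ⟨hBuv, hAuv⟩ := phi_orth_sup hA hB.1 ha hu hv
    have hBvu : star v ⬝ᵥ B *ᵥ u = 0 := by rw [← phi_conj hB.1, hBuv, star_zero]
    have hAvu : star v ⬝ᵥ A *ᵥ u = 0 := by rw [← phi_conj hA, hAuv, star_zero]
    have expand : ∀ M : Matrix (Fin n) (Fin n) ℂ,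
        star (u + v) ⬝ᵥ M *ᵥ (u + v) =
          star u ⬝ᵥ M *ᵥ u + star u ⬝ᵥ M *ᵥ v + (star v ⬝ᵥ M *ᵥ u + star v ⬝ᵥ M *ᵥ v) := by
      intro M
      rw [star_add, Matrix.mulVec_add, add_dotProduct, dotProduct_add,
        dotProduct_add]
    have hAuu : (star u ⬝ᵥ A *ᵥ u).re = a * (star u ⬝ᵥ B *ᵥ u).re := by
      rw [phi_row hA hB.1 hu u]
      simp [Complex.mul_re]
    have hBuu_nonneg : 0 ≤ (star u ⬝ᵥ B *ᵥ u).re := by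
      have := hB.posSemidef.dotProduct_mulVec_nonneg u
      exact (Complex.le_def.mp this).1
    have hvle := ih (fun μ hμ => hst μ (Finset.mem_insert_of_mem hμ)) v hv
    have hat : t ≤ a := hst a (Finset.mem_insert_self a s)
    rw [expand A, expand B, hBuv, hBvu, hAuv, hAvu]
    simp only [add_zero, zero_add, Complex.add_re]
    rw [hAuu, mul_add]
    have h1 : t * (star u ⬝ᵥ B *ᵥ u).re ≤ a * (star u ⬝ᵥ B *ᵥ u).re :=
      mul_le_mul_of_nonneg_right hat hBuu_nonneg
    linarith


lemma finrank_Vsp_eq {l : Fin n → ℝ} (hl : IsSortedPencilEigs A B l) (μ : ℝ) :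
    Module.finrank ℂ ↥(Vsp A B μ) = (Finset.univ.filter fun j => l j = μ).card := by
  classical
  rw [Vsp, ← hl.2 μ, Nat.card_eq_fintype_card, Fintype.card_subtype]

lemma cf_low (hA : A.IsHermitian) (hB : B.PosDef) {l : Fin n → ℝ}
    (hl : IsSortedPencilEigs A B l) (i : Fin n) :
    ∃ S : Submodule ℂ (Fin n → ℂ), (i : ℕ) + 1 ≤ Module.finrank ℂ ↥S ∧
      ∀ x ∈ S, (star x ⬝ᵥ A *ᵥ x).re ≤ l i * (star x ⬝ᵥ B *ᵥ x).re := by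
  classical
  set slo := (Finset.univ.image l).filter (· ≤ l i) with hslo
  refine ⟨⨆ μ ∈ slo, Vsp A B μ,
    ?_, quad_le hA hB (fun μ hμ => (Finset.mem_filter.mp hμ).2)⟩
  rw [finrank_sup hA hB]
  have hsum : ∑ μ ∈ slo, Module.finrank ℂ ↥(Vsp A B μ)
      = (Finset.univ.filter fun j => l j ≤ l i).card := by
    rw [Finset.card_eq_sum_card_fiberwise (f := l) (t := slo)
      (fun j hj => by
        rw [hslo]
        exact Finset.mem_filter.mpr ⟨Finset.mem_image_of_mem l (Finset.mem_univ j),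
          (Finset.mem_filter.mp hj).2⟩)]
    refine Finset.sum_congr rfl fun μ hμ => ?_
    rw [finrank_Vsp_eq hl]
    congr 1
    ext j
    simp only [Finset.mem_filter, Finset.mem_univ, true_and]
    exact ⟨fun h => ⟨h.trans_le (Finset.mem_filter.mp hμ).2, h⟩, fun h => h.2⟩
  rw [hsum]
  have hsub : Finset.Iic i ⊆ Finset.univ.filter fun j => l j ≤ l i := by
    intro j hj
    simp only [Finset.mem_filter, Finset.mem_univ, true_and]
    exact hl.1 (Finset.mem_Iic.mp hj)
  have := Finset.card_le_card hsub
  rwa [Fin.card_Iic] at this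

lemma cf_high (hA : A.IsHermitian) (hB : B.PosDef) {l : Fin n → ℝ}
    (hl : IsSortedPencilEigs A B l) (i : Fin n) :
    ∃ W : Submodule ℂ (Fin n → ℂ), n - (i : ℕ) ≤ Module.finrank ℂ ↥W ∧
      ∀ x ∈ W, l i * (star x ⬝ᵥ B *ᵥ x).re ≤ (star x ⬝ᵥ A *ᵥ x).re := by
  classical
  set shi := (Finset.univ.image l).filter (l i ≤ ·) with hshi
  refine ⟨⨆ μ ∈ shi, Vsp A B μ,
    ?_, quad_ge hA hB (fun μ hμ => (Finset.mem_filter.mp hμ).2)⟩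
  rw [finrank_sup hA hB]
  have hsum : ∑ μ ∈ shi, Module.finrank ℂ ↥(Vsp A B μ)
      = (Finset.univ.filter fun j => l i ≤ l j).card := by
    rw [Finset.card_eq_sum_card_fiberwise (f := l) (t := shi)
      (fun j hj => by
        rw [hshi]
        exact Finset.mem_filter.mpr ⟨Finset.mem_image_of_mem l (Finset.mem_univ j),
          (Finset.mem_filter.mp hj).2⟩)]
    refine Finset.sum_congr rfl fun μ hμ => ?_
    rw [finrank_Vsp_eq hl]
    congr 1
    ext j
    simp only [Finset.mem_filter, Finset.mem_univ, true_and]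
    exact ⟨fun h => ⟨(Finset.mem_filter.mp hμ).2.trans_eq h.symm, h⟩, fun h => h.2⟩
  rw [hsum]
  have hsub : Finset.Ici i ⊆ Finset.univ.filter fun j => l i ≤ l j := by
    intro j hj
    simp only [Finset.mem_filter, Finset.mem_univ, true_and]
    exact hl.1 (Finset.mem_Ici.mp hj)
  have := Finset.card_le_card hsub
  rwa [Fin.card_Ici] at this


lemma re_dot_pos (hB : B.PosDef) {x : Fin n → ℂ} (hx : x ≠ 0) :
    0 < (star x ⬝ᵥ B *ᵥ x).re := by
  have := hB.dotProduct_mulVec_pos hx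
  exact (Complex.lt_def.mp this).1

lemma compare_le {A' B' : Matrix (Fin n) (Fin n) ℂ}
    (hA : A.IsHermitian) (hB : B.PosDef) (hA' : A'.IsHermitian) (hB' : B'.PosDef)
    {l l' : Fin n → ℝ} (hl : IsSortedPencilEigs A B l) (hl' : IsSortedPencilEigs A' B' l')
    (g : ℝ → ℝ) (hg : Monotone g)
    (hpt : ∀ x : Fin n → ℂ, x ≠ 0 →
      (star x ⬝ᵥ A' *ᵥ x).re / (star x ⬝ᵥ B' *ᵥ x).re ≤
        g ((star x ⬝ᵥ A *ᵥ x).re / (star x ⬝ᵥ B *ᵥ x).re)) (i : Fin n) :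
    l' i ≤ g (l i) := by
  obtain ⟨S, hS, hSle⟩ := cf_low hA hB hl i
  obtain ⟨W, hW, hWge⟩ := cf_high hA' hB' hl' i
  have hfin := Submodule.finrank_sup_add_finrank_inf_eq S W
  have hle : Module.finrank ℂ ↥(S ⊔ W) ≤ n := by
    have h1 := Submodule.finrank_le (S ⊔ W)
    have h2 : Module.finrank ℂ (Fin n → ℂ) = n := by simp
    omega
  have hin : (i : ℕ) < n := i.isLt
  have hpos : 0 < Module.finrank ℂ ↥(S ⊓ W) := by omega
  have hne : S ⊓ W ≠ ⊥ := by
    intro h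
    rw [h, finrank_bot] at hpos
    omega
  obtain ⟨x, hxm, hx0⟩ := Submodule.exists_mem_ne_zero_of_ne_bot hne
  have hqB := re_dot_pos hB hx0
  have hqB' := re_dot_pos hB' hx0
  have h1 : (star x ⬝ᵥ A *ᵥ x).re / (star x ⬝ᵥ B *ᵥ x).re ≤ l i :=
    (div_le_iff₀ hqB).mpr (hSle x hxm.1)
  have h2 : l' i ≤ (star x ⬝ᵥ A' *ᵥ x).re / (star x ⬝ᵥ B' *ᵥ x).re :=
    (le_div_iff₀ hqB').mpr (hWge x hxm.2)
  exact h2.trans ((hpt x hx0).trans (hg h1))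

lemma compare_ge {A' B' : Matrix (Fin n) (Fin n) ℂ}
    (hA : A.IsHermitian) (hB : B.PosDef) (hA' : A'.IsHermitian) (hB' : B'.PosDef)
    {l l' : Fin n → ℝ} (hl : IsSortedPencilEigs A B l) (hl' : IsSortedPencilEigs A' B' l')
    (g : ℝ → ℝ) (hg : Monotone g)
    (hpt : ∀ x : Fin n → ℂ, x ≠ 0 →
      g ((star x ⬝ᵥ A *ᵥ x).re / (star x ⬝ᵥ B *ᵥ x).re) ≤
        (star x ⬝ᵥ A' *ᵥ x).re / (star x ⬝ᵥ B' *ᵥ x).re) (i : Fin n) :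
    g (l i) ≤ l' i := by
  obtain ⟨S, hS, hSle⟩ := cf_low hA' hB' hl' i
  obtain ⟨W, hW, hWge⟩ := cf_high hA hB hl i
  have hfin := Submodule.finrank_sup_add_finrank_inf_eq S W
  have hle : Module.finrank ℂ ↥(S ⊔ W) ≤ n := by
    have h1 := Submodule.finrank_le (S ⊔ W)
    have h2 : Module.finrank ℂ (Fin n → ℂ) = n := by simp
    omega
  have hin : (i : ℕ) < n := i.isLt
  have hpos : 0 < Module.finrank ℂ ↥(S ⊓ W) := by omega
  have hne : S ⊓ W ≠ ⊥ := by
    intro h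
    rw [h, finrank_bot] at hpos
    omega
  obtain ⟨x, hxm, hx0⟩ := Submodule.exists_mem_ne_zero_of_ne_bot hne
  have hqB := re_dot_pos hB hx0
  have hqB' := re_dot_pos hB' hx0
  have h1 : (star x ⬝ᵥ A' *ᵥ x).re / (star x ⬝ᵥ B' *ᵥ x).re ≤ l' i :=
    (div_le_iff₀ hqB').mpr (hSle x hxm.1)
  have h2 : l i ≤ (star x ⬝ᵥ A *ᵥ x).re / (star x ⬝ᵥ B *ᵥ x).re :=
    (le_div_iff₀ hqB).mpr (hWge x hxm.2)
  exact ((hg h2).trans (hpt x hx0)).trans h1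


/-- Euclidean norm of a plain vector. -/
noncomputable def enorm (x : Fin n → ℂ) : ℝ := ‖(WithLp.equiv 2 (Fin n → ℂ)).symm x‖

lemma enorm_nonneg (x : Fin n → ℂ) : 0 ≤ enorm x := norm_nonneg _

lemma enorm_pos {x : Fin n → ℂ} (hx : x ≠ 0) : 0 < enorm x := by
  rw [enorm, norm_pos_iff]
  simpa using hx

lemma nsq_eq (x : Fin n → ℂ) : (star x ⬝ᵥ x).re = enorm x ^ 2 := by
  have h : inner ℂ ((WithLp.equiv 2 (Fin n → ℂ)).symm x) ((WithLp.equiv 2 (Fin n → ℂ)).symm x)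
      = star x ⬝ᵥ x := dotProduct_comm _ _
  have h2 := inner_self_eq_norm_sq (𝕜 := ℂ) ((WithLp.equiv 2 (Fin n → ℂ)).symm x)
  rw [h] at h2
  simpa [enorm] using h2

lemma quad_abs_le (M : Matrix (Fin n) (Fin n) ℂ) (x : Fin n → ℂ) :
    |(star x ⬝ᵥ M *ᵥ x).re| ≤ ‖M‖ * enorm x ^ 2 := by
  have h : inner ℂ ((WithLp.equiv 2 (Fin n → ℂ)).symm x) ((WithLp.equiv 2 (Fin n → ℂ)).symm (M *ᵥ x))
      = star x ⬝ᵥ M *ᵥ x := dotProduct_comm _ _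
  set e := enorm x with he
  set y := ‖(WithLp.equiv 2 (Fin n → ℂ)).symm (M *ᵥ x)‖ with hy
  have hcs : ‖(inner ℂ ((WithLp.equiv 2 (Fin n → ℂ)).symm x)
      ((WithLp.equiv 2 (Fin n → ℂ)).symm (M *ᵥ x)) : ℂ)‖ ≤ e * y :=
    norm_inner_le_norm _ _
  have hmv : y ≤ ‖M‖ * e := by
    simpa [hy, he, enorm] using M.l2_opNorm_mulVec ((WithLp.equiv 2 (Fin n → ℂ)).symm x)
  have habs : |(star x ⬝ᵥ M *ᵥ x).re| ≤ ‖star x ⬝ᵥ M *ᵥ x‖ := Complex.abs_re_le_norm _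
  rw [← h] at habs
  have h1 : |(star x ⬝ᵥ M *ᵥ x).re| ≤ e * y := by
    rw [← h]; exact habs.trans hcs
  have he0 : 0 ≤ e := enorm_nonneg x
  nlinarith [h1, he0, hmv]

lemma quad_im_eq_zero {M : Matrix (Fin n) (Fin n) ℂ} (hM : M.IsHermitian) (x : Fin n → ℂ) :
    (star x ⬝ᵥ M *ᵥ x).im = 0 := by
  have h := phi_conj hM x x
  have : (starRingEnd ℂ) (star x ⬝ᵥ M *ᵥ x) = star x ⬝ᵥ M *ᵥ x := h
  exact Complex.conj_eq_iff_im.mp this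

lemma shift_posSemidef (hB : B.PosDef) {t : ℝ} (ht : ∀ i, t ≤ hB.1.eigenvalues i) :
    (B - (t : ℂ) • (1 : Matrix (Fin n) (Fin n) ℂ)).PosSemidef := by
  classical
  set U : Matrix (Fin n) (Fin n) ℂ := (Matrix.IsHermitian.eigenvectorUnitary hB.1 : Matrix (Fin n) (Fin n) ℂ)
  have hUU : U * star U = 1 :=
    (Matrix.mem_unitaryGroup_iff).mp (Matrix.IsHermitian.eigenvectorUnitary hB.1).2
  have hspec : B = U * Matrix.diagonal (RCLike.ofReal ∘ hB.1.eigenvalues) * star U :=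
    hB.1.spectral_theorem
  have key : B - (t : ℂ) • 1 =
      U * (Matrix.diagonal (fun i => ((hB.1.eigenvalues i - t : ℝ) : ℂ))) * star U := by
    have h1 : Matrix.diagonal (fun i => ((hB.1.eigenvalues i - t : ℝ) : ℂ)) =
        Matrix.diagonal (RCLike.ofReal ∘ hB.1.eigenvalues) - (t : ℂ) • 1 := by
      rw [← Matrix.diagonal_one, ← Matrix.diagonal_smul, Matrix.diagonal_sub]
      congr 1
      ext i
      push_cast
      simp [Function.comp]
    rw [h1, Matrix.mul_sub, Matrix.sub_mul, ← hspec]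
    congr 1
    rw [Matrix.mul_smul, Matrix.smul_mul, mul_one, hUU]
  rw [key]
  have hdiag : (Matrix.diagonal (fun i => ((hB.1.eigenvalues i - t : ℝ) : ℂ))).PosSemidef := by
    rw [Matrix.posSemidef_diagonal_iff]
    intro i
    rw [Complex.zero_le_real]
    linarith [ht i]
  have := hdiag.mul_mul_conjTranspose_same U
  rwa [← Matrix.star_eq_conjTranspose] at this

lemma rayleigh_lower (hB : B.PosDef) {t : ℝ} (ht : ∀ i, t ≤ hB.1.eigenvalues i) (x : Fin n → ℂ) :
    t * enorm x ^ 2 ≤ (star x ⬝ᵥ B *ᵥ x).re := by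
  have h := (shift_posSemidef hB ht).dotProduct_mulVec_nonneg x
  have h2 : star x ⬝ᵥ (B - (t : ℂ) • 1) *ᵥ x =
      star x ⬝ᵥ B *ᵥ x - (t : ℂ) * (star x ⬝ᵥ x) := by
    rw [Matrix.sub_mulVec, dotProduct_sub, Matrix.smul_mulVec, Matrix.one_mulVec,
      dotProduct_smul, smul_eq_mul]
  have h3 : 0 ≤ (star x ⬝ᵥ (B - (t : ℂ) • 1) *ᵥ x).re := by
    have := Complex.le_def.mp h
    exact this.1
  rw [h2] at h3
  have h4 : ((t : ℂ) * (star x ⬝ᵥ x)).re = t * (star x ⬝ᵥ x).re := by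
    simp [Complex.mul_re]
  rw [Complex.sub_re, h4, nsq_eq] at h3
  linarith

end PencilAux

namespace PencilAux

lemma div_le_div_of_nonpos' {t d D : ℝ} (ht : t ≤ 0) (h0 : 0 < d) (hdD : d ≤ D) :
    t / d ≤ t / D := by
  have hD0 : 0 < D := lt_of_lt_of_le h0 hdD
  rw [div_le_div_iff₀ h0 hD0]
  exact mul_le_mul_of_nonpos_left hdD ht

end PencilAux


open PencilAux in
set_option maxHeartbeats 2000000 in
/-- Theorem 2.5 of the paper (Nakatsukasa): a Weyl-type perturbation bound for the
sorted eigenvalues of a Hermitian definite pencil `(A, B)` under Hermitian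
perturbations `ΔA`, `ΔB` with `‖ΔB‖₂ < λ_min(B)`. -/
theorem pencil_eigenvalue_perturbation {n : ℕ}
    (A B ΔA ΔB : Matrix (Fin n) (Fin n) ℂ)
    (hA : A.IsHermitian) (hB : B.PosDef)
    (hΔA : ΔA.IsHermitian) (hΔB : ΔB.IsHermitian)
    (lminB : ℝ) (hlminB : lminB = ⨅ i, hB.1.eigenvalues i)
    (hsmall : specNorm ΔB < lminB)
    (lam lamh : Fin n → ℝ)
    (hlam : IsSortedPencilEigs A B lam)
    (hlamh : IsSortedPencilEigs (A + ΔA) (B + ΔB) lamh) :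
    (B + ΔB).PosDef ∧
      ∀ i : Fin n, |lam i - lamh i| ≤
        specNorm ΔA / lminB +
          ((|lam i| * lminB + specNorm ΔA) / (lminB * (lminB - specNorm ΔB))) *
            specNorm ΔB := by
  have hb0 : (0:ℝ) ≤ specNorm ΔB := norm_nonneg _
  have ha0 : (0:ℝ) ≤ specNorm ΔA := norm_nonneg _
  rcases Nat.eq_zero_or_pos n with hn | hn
  · subst hn
    exfalso
    rw [hlminB] at hsmall
    have h0 : (⨅ i : Fin 0, hB.1.eigenvalues i) = 0 := Real.iInf_of_isEmpty _
    rw [h0] at hsmall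
    exact absurd hsmall (not_lt.mpr hb0)
  haveI : Nonempty (Fin n) := ⟨⟨0, hn⟩⟩
  simp only [specNorm] at hsmall hb0 ha0 ⊢
  set a := ‖ΔA‖ with ha_def
  set b := ‖ΔB‖ with hb_def
  set l := lminB with hl_def
  have hlle : ∀ i, l ≤ hB.1.eigenvalues i := by
    intro i
    rw [hlminB]
    exact ciInf_le (Set.Finite.bddBelow (Set.finite_range _)) i
  have hl0 : 0 < l := by
    obtain ⟨i₀, -, hi₀⟩ := Finset.exists_min_image Finset.univ hB.1.eigenvalues
      ⟨⟨0, hn⟩, Finset.mem_univ _⟩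
    rw [hlminB]
    exact lt_of_lt_of_le (hB.eigenvalues_pos i₀)
      (le_ciInf fun j => hi₀ j (Finset.mem_univ _))
  have hbl : b < l := hsmall
  have hlb0 : 0 < l - b := by linarith
  have hqB_lower : ∀ x : Fin n → ℂ, l * PencilAux.enorm x ^ 2 ≤ (star x ⬝ᵥ B *ᵥ x).re := fun x =>
    rayleigh_lower hB hlle x
  -- positive definiteness of B + ΔB
  have hBh : (B + ΔB).PosDef := by
    refine Matrix.PosDef.of_dotProduct_mulVec_pos (hB.1.add hΔB) fun x hx => ?_
    have hexp : star x ⬝ᵥ (B + ΔB) *ᵥ x = star x ⬝ᵥ B *ᵥ x + star x ⬝ᵥ ΔB *ᵥ x := by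
      rw [Matrix.add_mulVec, dotProduct_add]
    have him : (star x ⬝ᵥ (B + ΔB) *ᵥ x).im = 0 := quad_im_eq_zero (hB.1.add hΔB) x
    have habs := quad_abs_le ΔB x
    have he2 : 0 < PencilAux.enorm x ^ 2 := pow_pos (enorm_pos hx) 2
    have hre : 0 < (star x ⬝ᵥ (B + ΔB) *ᵥ x).re := by
      rw [hexp, Complex.add_re]
      have h1 := hqB_lower x
      rw [← hb_def] at habs
      nlinarith [neg_abs_le ((star x ⬝ᵥ ΔB *ᵥ x).re)]
    rw [Complex.lt_def]
    exact ⟨by simpa using hre, by simpa using him.symm⟩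
  refine ⟨hBh, fun i => ?_⟩
  -- constants
  set c : ℝ := a / l with hc_def
  set β : ℝ := b / l with hβ_def
  set D : ℝ := b / (l - b) with hD_def
  have hc0 : 0 ≤ c := by positivity
  have hβ0 : 0 ≤ β := by positivity
  have hD0 : 0 ≤ D := by positivity
  have hβ1 : β < 1 := by rw [hβ_def, div_lt_one hl0]; exact hbl
  have h1β : 0 < 1 - β := by linarith
  have h1β' : 0 < 1 + β := by linarith
  have hDβ : D * (1 - β) = β := by
    rw [hD_def, hβ_def]
    field_simp
  have hβD : β ≤ D := by nlinarith [mul_nonneg hD0 hβ0]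
  -- comparison functions
  set g : ℝ → ℝ := fun t => if 0 ≤ t + c then (t + c) / (1 - β) else (t + c) / (1 + β)
    with hg_def
  set gm : ℝ → ℝ := fun t => if 0 ≤ t - c then (t - c) / (1 + β) else (t - c) / (1 - β)
    with hgm_def
  have hg_mono : Monotone g := by
    intro u v huv
    simp only [hg_def]
    split_ifs with h1 h2 h2
    · gcongr <;> linarith
    · linarith
    · calc (u + c) / (1 + β) ≤ 0 :=
          div_nonpos_iff.mpr (Or.inr ⟨by linarith, by linarith⟩)
        _ ≤ (v + c) / (1 - β) := div_nonneg h2 (le_of_lt h1β)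
    · gcongr <;> linarith
  have hgm_mono : Monotone gm := by
    intro u v huv
    simp only [hgm_def]
    split_ifs with h1 h2 h2
    · gcongr <;> linarith
    · linarith
    · calc (u - c) / (1 - β) ≤ 0 :=
          div_nonpos_iff.mpr (Or.inr ⟨by linarith, by linarith⟩)
        _ ≤ (v - c) / (1 + β) := div_nonneg h2 (le_of_lt h1β')
    · gcongr <;> linarith
  -- pointwise facts
  have hexpA : ∀ x : Fin n → ℂ,
      (star x ⬝ᵥ (A + ΔA) *ᵥ x).re = (star x ⬝ᵥ A *ᵥ x).re + (star x ⬝ᵥ ΔA *ᵥ x).re := by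
    intro x
    rw [Matrix.add_mulVec, dotProduct_add, Complex.add_re]
  have hexpB : ∀ x : Fin n → ℂ,
      (star x ⬝ᵥ (B + ΔB) *ᵥ x).re = (star x ⬝ᵥ B *ᵥ x).re + (star x ⬝ᵥ ΔB *ᵥ x).re := by
    intro x
    rw [Matrix.add_mulVec, dotProduct_add, Complex.add_re]
  have hfacts : ∀ x : Fin n → ℂ, x ≠ 0 →
      0 < (star x ⬝ᵥ B *ᵥ x).re ∧
      (1 - β) * (star x ⬝ᵥ B *ᵥ x).re ≤ (star x ⬝ᵥ (B + ΔB) *ᵥ x).re ∧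
      (star x ⬝ᵥ (B + ΔB) *ᵥ x).re ≤ (1 + β) * (star x ⬝ᵥ B *ᵥ x).re ∧
      |(star x ⬝ᵥ ΔA *ᵥ x).re| ≤ c * (star x ⬝ᵥ B *ᵥ x).re := by
    intro x hx
    have he2 : 0 < PencilAux.enorm x ^ 2 := pow_pos (enorm_pos hx) 2
    have hqB := hqB_lower x
    have hqB0 : 0 < (star x ⬝ᵥ B *ᵥ x).re := lt_of_lt_of_le (by positivity) hqB
    have habsB := quad_abs_le ΔB x
    have habsA := quad_abs_le ΔA x
    rw [← hb_def] at habsB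
    rw [← ha_def] at habsA
    have hbe : b * PencilAux.enorm x ^ 2 ≤ β * (star x ⬝ᵥ B *ᵥ x).re := by
      rw [hβ_def, div_mul_eq_mul_div, le_div_iff₀ hl0]
      nlinarith
    have hae : a * PencilAux.enorm x ^ 2 ≤ c * (star x ⬝ᵥ B *ᵥ x).re := by
      rw [hc_def, div_mul_eq_mul_div, le_div_iff₀ hl0]
      nlinarith
    refine ⟨hqB0, ?_, ?_, ?_⟩
    · rw [hexpB x]; nlinarith [neg_abs_le ((star x ⬝ᵥ ΔB *ᵥ x).re)]
    · rw [hexpB x]; nlinarith [le_abs_self ((star x ⬝ᵥ ΔB *ᵥ x).re)]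
    · calc |(star x ⬝ᵥ ΔA *ᵥ x).re| ≤ a * PencilAux.enorm x ^ 2 := habsA
        _ ≤ c * (star x ⬝ᵥ B *ᵥ x).re := hae
  -- pointwise upper estimate
  have hptU : ∀ x : Fin n → ℂ, x ≠ 0 →
      (star x ⬝ᵥ (A + ΔA) *ᵥ x).re / (star x ⬝ᵥ (B + ΔB) *ᵥ x).re ≤
        g ((star x ⬝ᵥ A *ᵥ x).re / (star x ⬝ᵥ B *ᵥ x).re) := by
    intro x hx
    obtain ⟨hqB0, hBh_lo, hBh_hi, hΔA_abs⟩ := hfacts x hx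
    set qA := (star x ⬝ᵥ A *ᵥ x).re
    set qB := (star x ⬝ᵥ B *ᵥ x).re
    set qAh := (star x ⬝ᵥ (A + ΔA) *ᵥ x).re
    set qBh := (star x ⬝ᵥ (B + ΔB) *ᵥ x).re
    have hqBh0 : 0 < qBh := lt_of_lt_of_le (by positivity) hBh_lo
    set R := qA / qB with hR_def
    have hRqB : R * qB = qA := div_mul_cancel₀ qA (ne_of_gt hqB0)
    have hnum : qAh ≤ (R + c) * qB := by
      rw [add_mul, hRqB]
      have h := hexpA x
      nlinarith [le_abs_self ((star x ⬝ᵥ ΔA *ᵥ x).re)]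
    simp only [hg_def]
    split_ifs with h
    · calc qAh / qBh ≤ ((R + c) * qB) / qBh := by gcongr
        _ ≤ ((R + c) * qB) / ((1 - β) * qB) := by
            apply div_le_div_of_nonneg_left (by positivity) (by positivity) hBh_lo
        _ = (R + c) / (1 - β) := mul_div_mul_right _ _ (ne_of_gt hqB0)
    · have hRc : R + c < 0 := not_le.mp h
      calc qAh / qBh ≤ ((R + c) * qB) / qBh := by gcongr
        _ ≤ ((R + c) * qB) / ((1 + β) * qB) :=
            div_le_div_of_nonpos' (by nlinarith) hqBh0 (by linarith [hBh_hi])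
        _ = (R + c) / (1 + β) := mul_div_mul_right _ _ (ne_of_gt hqB0)
  -- pointwise lower estimate
  have hptL : ∀ x : Fin n → ℂ, x ≠ 0 →
      gm ((star x ⬝ᵥ A *ᵥ x).re / (star x ⬝ᵥ B *ᵥ x).re) ≤
        (star x ⬝ᵥ (A + ΔA) *ᵥ x).re / (star x ⬝ᵥ (B + ΔB) *ᵥ x).re := by
    intro x hx
    obtain ⟨hqB0, hBh_lo, hBh_hi, hΔA_abs⟩ := hfacts x hx
    set qA := (star x ⬝ᵥ A *ᵥ x).re
    set qB := (star x ⬝ᵥ B *ᵥ x).re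
    set qAh := (star x ⬝ᵥ (A + ΔA) *ᵥ x).re
    set qBh := (star x ⬝ᵥ (B + ΔB) *ᵥ x).re
    have hqBh0 : 0 < qBh := lt_of_lt_of_le (by positivity) hBh_lo
    set R := qA / qB with hR_def
    have hRqB : R * qB = qA := div_mul_cancel₀ qA (ne_of_gt hqB0)
    have hnum : (R - c) * qB ≤ qAh := by
      rw [sub_mul, hRqB]
      have h := hexpA x
      nlinarith [neg_abs_le ((star x ⬝ᵥ ΔA *ᵥ x).re)]
    simp only [hgm_def]
    split_ifs with h
    · calc (R - c) / (1 + β) = ((R - c) * qB) / ((1 + β) * qB) :=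
          (mul_div_mul_right _ _ (ne_of_gt hqB0)).symm
        _ ≤ ((R - c) * qB) / qBh := by
            apply div_le_div_of_nonneg_left (by positivity) hqBh0 hBh_hi
        _ ≤ qAh / qBh := by gcongr
    · have hRc : R - c < 0 := not_le.mp h
      calc (R - c) / (1 - β) = ((R - c) * qB) / ((1 - β) * qB) :=
          (mul_div_mul_right _ _ (ne_of_gt hqB0)).symm
        _ ≤ ((R - c) * qB) / qBh :=
            div_le_div_of_nonpos' (by nlinarith) (by positivity) hBh_lo
        _ ≤ qAh / qBh := by gcongr
  -- compare the sorted lists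
  have hup : lamh i ≤ g (lam i) :=
    compare_le hA hB (hA.add hΔA) hBh hlam hlamh g hg_mono hptU i
  have hlo : gm (lam i) ≤ lamh i :=
    compare_ge hA hB (hA.add hΔA) hBh hlam hlamh gm hgm_mono hptL i
  -- final arithmetic
  set lami := lam i with hlami
  set T : ℝ := a / l + ((|lami| * l + a) / (l * (l - b))) * b with hT_def
  have hTeq : T = c + (|lami| + c) * D := by
    rw [hT_def, hc_def, hD_def]
    field_simp
  have habs1 : lami ≤ |lami| := le_abs_self _
  have habs2 : -lami ≤ |lami| := neg_le_abs _
  have habs0 : 0 ≤ |lami| := abs_nonneg _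
  have hgup : g lami ≤ lami + T := by
    rw [hTeq]
    simp only [hg_def]
    split_ifs with h
    · rw [div_le_iff₀ h1β]
      nlinarith [hDβ, mul_nonneg hβ0 (sub_nonneg.mpr habs1)]
    · rw [div_le_iff₀ h1β']
      nlinarith [hDβ, mul_nonneg hD0 hβ0, mul_nonneg (mul_nonneg hD0 hβ0) (by linarith : (0:ℝ) ≤ |lami| + c)]
  have hgmlo : lami - T ≤ gm lami := by
    rw [hTeq]
    simp only [hgm_def]
    split_ifs with h
    · rw [le_div_iff₀ h1β']
      nlinarith [hDβ, mul_nonneg hD0 hβ0, mul_nonneg (mul_nonneg hD0 hβ0) (by linarith : (0:ℝ) ≤ |lami| + c)]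
    · rw [le_div_iff₀ h1β]
      nlinarith [hDβ, mul_nonneg hβ0 (by linarith : (0:ℝ) ≤ |lami| + c)]
  rw [abs_sub_le_iff]
  constructor
  · linarith
  · linarith
end

section
/- Let B ∈ ℂ^{n×n} be Hermitian positive definite, let p be a real polynomial, let τ > 0 with ‖B‖₂ < 1/τ, and suppose ‖B^{−1} − p(B)‖₂ ≤ τ. Then p(B) is positive definite and ‖B − (p(B))^{−1}‖₂ ≤ ‖B‖₂² τ / (1 − ‖B‖₂ τ). -/
open scoped Matrix.Norms.L2Operator ComplexOrder

lemma EuclideanSpace.inner_piLp_equiv_symm {n : ℕ} (x y : Fin n → ℂ) :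
    inner ℂ ((WithLp.equiv 2 (Fin n → ℂ)).symm x) ((WithLp.equiv 2 (Fin n → ℂ)).symm y) =
      star x ⬝ᵥ y := by
  rw [dotProduct_comm]; rfl

open Matrix in
/-- quadratic form upper bound by operator norm -/
lemma quadform_le_norm {n : ℕ} (A : Matrix (Fin n) (Fin n) ℂ) (x : Fin n → ℂ) :
    ‖star x ⬝ᵥ (A *ᵥ x)‖ ≤ ‖A‖ * ‖(WithLp.equiv 2 (Fin n → ℂ)).symm x‖ ^ 2 := by
  have h1 := norm_inner_le_norm (𝕜 := ℂ) ((WithLp.equiv 2 (Fin n → ℂ)).symm x)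
      ((WithLp.equiv 2 (Fin n → ℂ)).symm (A *ᵥ x))
  rw [EuclideanSpace.inner_piLp_equiv_symm] at h1
  have h2 := Matrix.l2_opNorm_mulVec A ((WithLp.equiv 2 (Fin n → ℂ)).symm x)
  calc ‖star x ⬝ᵥ (A *ᵥ x)‖
      ≤ ‖(WithLp.equiv 2 (Fin n → ℂ)).symm x‖ * ‖(WithLp.equiv 2 (Fin n → ℂ)).symm (A *ᵥ x)‖ := h1
    _ ≤ ‖(WithLp.equiv 2 (Fin n → ℂ)).symm x‖ * (‖A‖ * ‖(WithLp.equiv 2 (Fin n → ℂ)).symm x‖) :=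
        mul_le_mul_of_nonneg_left h2 (norm_nonneg _)
    _ = ‖A‖ * ‖(WithLp.equiv 2 (Fin n → ℂ)).symm x‖ ^ 2 := by ring

open Matrix in
lemma euclid_norm_sq {n : ℕ} (v : Fin n → ℂ) :
    ‖(WithLp.equiv 2 (Fin n → ℂ)).symm v‖ ^ 2 = (star v ⬝ᵥ v).re := by
  have := norm_sq_eq_re_inner (𝕜 := ℂ) ((WithLp.equiv 2 (Fin n → ℂ)).symm v)
  rw [EuclideanSpace.inner_piLp_equiv_symm] at this
  exact this

open Matrix in
/-- Hermitian-ness of real polynomial applied to a Hermitian matrix -/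
lemma aeval_map_isHermitian {n : ℕ} {B : Matrix (Fin n) (Fin n) ℂ} (hB : B.IsHermitian)
    (p : Polynomial ℝ) :
    (Polynomial.aeval B (p.map (algebraMap ℝ ℂ))).IsHermitian := by
  induction p using Polynomial.induction_on' with
  | add f g hf hg =>
      rw [Polynomial.map_add, map_add]
      exact hf.add hg
  | monomial k r =>
      rw [Polynomial.map_monomial, Polynomial.aeval_monomial, Algebra.algebraMap_eq_smul_one,
        smul_mul_assoc, one_mul]
      have hp := hB.pow k
      unfold Matrix.IsHermitian at hp ⊢
      rw [Matrix.conjTranspose_smul, hp]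
      congr 1
      simp [Complex.star_def, Complex.conj_ofReal]

open Matrix MatrixOrder in
/-- lower bound on quadratic form of the inverse -/
lemma inv_quadform_lower {n : ℕ} {B : Matrix (Fin n) (Fin n) ℂ} (hB : B.PosDef) (x : Fin n → ℂ) :
    ‖(WithLp.equiv 2 (Fin n → ℂ)).symm x‖ ^ 2 ≤ ‖B‖ * (star x ⬝ᵥ B⁻¹ *ᵥ x).re := by
  classical
  set S := CFC.sqrt B with hSdef
  have hSmul : S * S = B := CFC.sqrt_mul_sqrt_self B hB.posSemidef.nonneg
  have hSH : S.IsHermitian := (CFC.sqrt_nonneg B).posSemidef.isHermitian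
  have hBd : IsUnit B.det := isUnit_iff_ne_zero.2 hB.det_pos.ne'
  have hSd : IsUnit S.det := by
    have : IsUnit (S.det * S.det) := by
      rw [← Matrix.det_mul, hSmul]; exact hBd
    exact isUnit_of_mul_isUnit_left this
  set y := S⁻¹ *ᵥ x with hy
  have hSy : S *ᵥ y = x := by
    rw [hy, Matrix.mulVec_mulVec, Matrix.mul_nonsing_inv _ hSd, Matrix.one_mulVec]
  have hSinvH : S⁻¹ᴴ = S⁻¹ := by rw [Matrix.conjTranspose_nonsing_inv, hSH.eq]
  -- k1
  have k1 : star x ⬝ᵥ x = star (S *ᵥ x) ⬝ᵥ y := by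
    rw [Matrix.star_mulVec, hSH.eq, ← Matrix.dotProduct_mulVec, hSy]
  -- k2
  have k2 : star (S *ᵥ x) ⬝ᵥ (S *ᵥ x) = star x ⬝ᵥ (B *ᵥ x) := by
    rw [Matrix.star_mulVec, hSH.eq, ← Matrix.dotProduct_mulVec, Matrix.mulVec_mulVec, hSmul]
  -- k3
  have k3 : star y ⬝ᵥ y = star x ⬝ᵥ (B⁻¹ *ᵥ x) := by
    rw [hy, Matrix.star_mulVec, hSinvH, ← Matrix.dotProduct_mulVec, Matrix.mulVec_mulVec,
      ← Matrix.mul_inv_rev, hSmul]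
  set a := ‖(WithLp.equiv 2 (Fin n → ℂ)).symm x‖ with ha
  set b := ‖(WithLp.equiv 2 (Fin n → ℂ)).symm y‖ with hb
  set c := ‖(WithLp.equiv 2 (Fin n → ℂ)).symm (S *ᵥ x)‖ with hcc
  -- a^2 ≤ c * b via Cauchy-Schwarz on k1
  have h1 : a ^ 2 ≤ c * b := by
    have hcs := norm_inner_le_norm (𝕜 := ℂ) ((WithLp.equiv 2 (Fin n → ℂ)).symm (S *ᵥ x))
        ((WithLp.equiv 2 (Fin n → ℂ)).symm y)
    rw [EuclideanSpace.inner_piLp_equiv_symm, ← k1] at hcs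
    have hre : a ^ 2 = (star x ⬝ᵥ x).re := euclid_norm_sq x
    have : (star x ⬝ᵥ x).re ≤ ‖star x ⬝ᵥ x‖ := Complex.re_le_norm _
    linarith
  -- c^2 ≤ ‖B‖ * a^2
  have h2 : c ^ 2 ≤ ‖B‖ * a ^ 2 := by
    have := euclid_norm_sq (S *ᵥ x)
    rw [k2] at this
    have h3 : (star x ⬝ᵥ (B *ᵥ x)).re ≤ ‖star x ⬝ᵥ (B *ᵥ x)‖ := Complex.re_le_norm _
    have h4 := quadform_le_norm B x
    rw [← ha] at h4
    linarith
  -- b^2 = re (x* B⁻¹ x)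
  have h5 : b ^ 2 = (star x ⬝ᵥ B⁻¹ *ᵥ x).re := by
    have := euclid_norm_sq y
    rw [k3] at this
    exact this
  rw [← h5]
  have hBnn : (0:ℝ) ≤ ‖B‖ := norm_nonneg _
  have hann : (0:ℝ) ≤ a := norm_nonneg _
  have hbnn : (0:ℝ) ≤ b := norm_nonneg _
  have hcnn : (0:ℝ) ≤ c := norm_nonneg _
  have hA4 : a ^ 2 * a ^ 2 ≤ (c * b) * (c * b) :=
    mul_le_mul h1 h1 (sq_nonneg a) (mul_nonneg hcnn hbnn)
  have hB2 : c ^ 2 * b ^ 2 ≤ (‖B‖ * a ^ 2) * b ^ 2 :=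
    mul_le_mul_of_nonneg_right h2 (sq_nonneg b)
  nlinarith [mul_nonneg hBnn (sq_nonneg b), sq_nonneg a, hA4, hB2]

open Matrix in
/-- op-norm bound from vector bounds -/
lemma l2_opNorm_le_of {n : ℕ} (A : Matrix (Fin n) (Fin n) ℂ) {C : ℝ} (hC : 0 ≤ C)
    (h : ∀ x : Fin n → ℂ, ‖(WithLp.equiv 2 (Fin n → ℂ)).symm (A *ᵥ x)‖
        ≤ C * ‖(WithLp.equiv 2 (Fin n → ℂ)).symm x‖) : ‖A‖ ≤ C := by
  rw [Matrix.l2_opNorm_def]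
  refine ContinuousLinearMap.opNorm_le_bound _ hC fun x => ?_
  have := h (WithLp.equiv 2 (Fin n → ℂ) x)
  exact this

open Matrix in
/-- If `B` is Hermitian positive definite, `p` is a real polynomial with
`‖B⁻¹ − p(B)‖₂ ≤ τ` and `‖B‖₂ < 1/τ`, then `p(B)` is positive definite and
`‖B − (p(B))⁻¹‖₂ ≤ ‖B‖₂² τ / (1 − ‖B‖₂ τ)`. -/
theorem poly_inverse_approx_perturbation {n : ℕ}
    (B : Matrix (Fin n) (Fin n) ℂ) (hB : B.PosDef)
    (p : Polynomial ℝ) (τ : ℝ) (hτ : 0 < τ)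
    (hBτ : specNorm B < 1 / τ)
    (happrox : specNorm (B⁻¹ - Polynomial.aeval B (p.map (algebraMap ℝ ℂ))) ≤ τ) :
    (Polynomial.aeval B (p.map (algebraMap ℝ ℂ))).PosDef ∧
      specNorm (B - (Polynomial.aeval B (p.map (algebraMap ℝ ℂ)))⁻¹) ≤
        specNorm B ^ 2 * τ / (1 - specNorm B * τ) := by
  classical
  set P := Polynomial.aeval B (p.map (algebraMap ℝ ℂ)) with hPdef
  have hPH : P.IsHermitian := aeval_map_isHermitian hB.1 p
  have hBτ' : ‖B‖ < 1 / τ := hBτ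
  have hE : ‖B⁻¹ - P‖ ≤ τ := happrox
  rcases Nat.eq_zero_or_pos n with hn | hn
  · subst hn
    constructor
    · exact ⟨hPH, fun x hx => absurd (Subsingleton.elim x 0) hx⟩
    · have h1 : B - P⁻¹ = 0 := Subsingleton.elim _ _
      have h2 : B = 0 := Subsingleton.elim _ _
      show ‖B - P⁻¹‖ ≤ ‖B‖ ^ 2 * τ / (1 - ‖B‖ * τ)
      rw [h1, h2, norm_zero]
      simp
  · have hK0 : (0:ℝ) < ‖B‖ := by
      have hx : (fun _ : Fin n => (1:ℂ)) ≠ 0 := by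
        intro h
        have := congrFun h ⟨0, hn⟩
        simpa using this
      have hq := hB.dotProduct_mulVec_pos hx
      have hBne : B ≠ 0 := by
        intro h
        rw [h] at hq
        simpa using hq
      exact norm_pos_iff.2 hBne
    have hKτ : ‖B‖ * τ < 1 := by
      have := (lt_div_iff₀ hτ).mp hBτ'
      linarith
    set c := 1 / ‖B‖ - τ with hc
    have hc0 : 0 < c := by
      rw [hc, sub_pos]
      rw [lt_div_iff₀ hK0]
      linarith [mul_comm τ ‖B‖]
    -- coercivity of P
    have hcoer : ∀ x : Fin n → ℂ,
        c * ‖(WithLp.equiv 2 (Fin n → ℂ)).symm x‖ ^ 2 ≤ (star x ⬝ᵥ P *ᵥ x).re := by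
      intro x
      set a := ‖(WithLp.equiv 2 (Fin n → ℂ)).symm x‖ with ha
      have hsplit : star x ⬝ᵥ P *ᵥ x = star x ⬝ᵥ B⁻¹ *ᵥ x - star x ⬝ᵥ (B⁻¹ - P) *ᵥ x := by
        rw [Matrix.sub_mulVec, dotProduct_sub]
        ring
      have h1 := inv_quadform_lower hB x
      rw [← ha] at h1
      have h2 := quadform_le_norm (B⁻¹ - P) x
      rw [← ha] at h2
      have h3 : (star x ⬝ᵥ (B⁻¹ - P) *ᵥ x).re ≤ τ * a ^ 2 := by
        have h4 : (star x ⬝ᵥ (B⁻¹ - P) *ᵥ x).re ≤ ‖star x ⬝ᵥ (B⁻¹ - P) *ᵥ x‖ :=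
          Complex.re_le_norm _
        nlinarith [sq_nonneg a]
      have h5 : a ^ 2 / ‖B‖ ≤ (star x ⬝ᵥ B⁻¹ *ᵥ x).re := by
        rw [div_le_iff₀ hK0]
        linarith [mul_comm ‖B‖ ((star x ⬝ᵥ B⁻¹ *ᵥ x).re)]
      rw [hsplit, Complex.sub_re]
      have h6 : c * a ^ 2 = a ^ 2 / ‖B‖ - τ * a ^ 2 := by
        field_simp [hc]
        rw [hc]; linear_combination (a ^ 2) * (one_div_mul_cancel hK0.ne')
      linarith
    -- quadratic form of Hermitian is real
    have hreal : ∀ x : Fin n → ℂ, (star x ⬝ᵥ P *ᵥ x).im = 0 := by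
      intro x
      have h1 : star x ⬝ᵥ P *ᵥ x = star (star (P *ᵥ x) ⬝ᵥ x) := Matrix.star_dotProduct _ _
      have h2 : star (P *ᵥ x) ⬝ᵥ x = star x ⬝ᵥ P *ᵥ x := by
        rw [Matrix.star_mulVec, hPH.eq, ← Matrix.dotProduct_mulVec]
      rw [h2] at h1
      have := congrArg Complex.im h1.symm
      simp only [Complex.star_def, Complex.conj_im] at this
      linarith
    -- positive definiteness
    have hPD : P.PosDef := by
      refine Matrix.PosDef.of_dotProduct_mulVec_pos hPH fun x hx => ?_
      have hxn : (0:ℝ) < ‖(WithLp.equiv 2 (Fin n → ℂ)).symm x‖ := by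
        rw [norm_pos_iff]
        intro h
        exact hx (by simpa using congrArg (WithLp.equiv 2 (Fin n → ℂ)) h)
      have hre := hcoer x
      rw [Complex.lt_def]
      refine ⟨?_, by simpa using (hreal x).symm⟩
      simp only [Complex.zero_re]
      linarith [mul_pos hc0 (pow_pos hxn 2)]
    refine ⟨hPD, ?_⟩
    have hPdet : IsUnit P.det := isUnit_iff_ne_zero.2 hPD.det_pos.ne'
    have hBdet : IsUnit B.det := isUnit_iff_ne_zero.2 hB.det_pos.ne'
    -- norm bound on P⁻¹
    have hPinv : ‖P⁻¹‖ ≤ 1 / c := by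
      apply l2_opNorm_le_of _ (by positivity)
      intro yv
      set x := P⁻¹ *ᵥ yv with hxdef
      have hPx : P *ᵥ x = yv := by
        rw [hxdef, Matrix.mulVec_mulVec, Matrix.mul_nonsing_inv _ hPdet, Matrix.one_mulVec]
      have h1 := hcoer x
      rw [hPx] at h1
      set a := ‖(WithLp.equiv 2 (Fin n → ℂ)).symm x‖ with ha
      set d := ‖(WithLp.equiv 2 (Fin n → ℂ)).symm yv‖ with hd
      have h2 : (star x ⬝ᵥ yv).re ≤ a * d := by
        have hcs := norm_inner_le_norm (𝕜 := ℂ) ((WithLp.equiv 2 (Fin n → ℂ)).symm x)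
          ((WithLp.equiv 2 (Fin n → ℂ)).symm yv)
        rw [EuclideanSpace.inner_piLp_equiv_symm] at hcs
        have hra : (star x ⬝ᵥ yv).re ≤ ‖star x ⬝ᵥ yv‖ := Complex.re_le_norm _
        exact hra.trans hcs
      show a ≤ 1 / c * d
      have hann : (0:ℝ) ≤ a := norm_nonneg _
      have hdnn : (0:ℝ) ≤ d := norm_nonneg _
      rcases eq_or_lt_of_le hann with h0 | h0
      · rw [← h0]
        positivity
      · have key : c * a ≤ d := by nlinarith [h1, h2, h0]
        rw [one_div, inv_mul_eq_div, le_div_iff₀ hc0]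
        linarith [mul_comm a c]
    -- the algebraic identity
    have hid : B - P⁻¹ = B * (P - B⁻¹) * P⁻¹ := by
      have h1 : P * P⁻¹ = 1 := Matrix.mul_nonsing_inv _ hPdet
      have h2 : B * B⁻¹ = 1 := Matrix.mul_nonsing_inv _ hBdet
      rw [mul_sub, sub_mul, mul_assoc, h1, mul_one, mul_assoc, ← Matrix.mul_assoc B B⁻¹ P⁻¹,
        h2, Matrix.one_mul]
    show ‖B - P⁻¹‖ ≤ ‖B‖ ^ 2 * τ / (1 - ‖B‖ * τ)
    have hEP : ‖P - B⁻¹‖ ≤ τ := by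
      rw [norm_sub_rev]
      exact hE
    have hfinal : ‖B - P⁻¹‖ ≤ ‖B‖ * τ * (1 / c) := by
      calc ‖B - P⁻¹‖ = ‖B * (P - B⁻¹) * P⁻¹‖ := by rw [hid]
        _ ≤ ‖B * (P - B⁻¹)‖ * ‖P⁻¹‖ := norm_mul_le _ _
        _ ≤ (‖B‖ * ‖P - B⁻¹‖) * ‖P⁻¹‖ :=
            mul_le_mul_of_nonneg_right (norm_mul_le _ _) (norm_nonneg _)
        _ ≤ (‖B‖ * τ) * (1 / c) := by
            apply mul_le_mul
            · exact mul_le_mul_of_nonneg_left hEP (norm_nonneg _)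
            · exact hPinv
            · exact norm_nonneg _
            · positivity
    have heq : ‖B‖ * τ * (1 / c) = ‖B‖ ^ 2 * τ / (1 - ‖B‖ * τ) := by
      rw [hc]
      have h1 : (1:ℝ) - ‖B‖ * τ ≠ 0 := by linarith
      field_simp
    linarith [hfinal, heq.le, heq.ge]
end
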